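/- arXiv:1308.3643 — 2 statements merged into one kernel-verified Lean document; each statement's English description precedes it below -/
import Mathlib

section
/- Let G : ℝ^d → (convex compact subsets of ℝ^d) be l-Lipschitz w.r.t. the sup-norm Hausdorff distance with l < 1. Then for every ξ ∈ ℝ^d, the set (id + G)⁻¹(ξ) := {x ∈ ℝ^d : ξ ∈ x + G(x)} is path-connected: for any z, z̃ in this set there is a continuous map φ : [0,1] → ℝ^d with φ(0) = z, φ(1) = z̃ and ξ ∈ φ(λ) + G(φ(λ)) for all λ ∈ [0,1]. -/
/-!
With `S x = {ξ} - G x`, the solutions are the fixed points `x ∈ S x` of a set-valued contraction.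
If every point of a path `γ` between two fixed points satisfies `infDist (γ t) (S (γ t)) ≤ ε`,
replace `γ` by the polygonal path through nearest points of `S (γ (i / N))` on a fine grid.
Convexity of the values keeps each point of the polygon close to `S (γ t)`, and the Lipschitz
bound then makes the new defect at most `(1 + l) / 2 * ε`, while the path moves by at most `2 ε`.
The iterated paths converge uniformly, and the defect of the limit path vanishes.
-/

open Metric Set Pointwise Filter Topology unitInterval

section Polygonal

open Finset

variable {E : Type*} [AddCommGroup E] [Module ℝ E]

/-- The piecewise affine map with `polygonal y N i = y i` for `i ≤ N`, constant outside `[0, N]`;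
written as a telescoping sum of clamped increments so that continuity is immediate. -/
noncomputable def polygonal (y : ℕ → E) (N : ℕ) (s : ℝ) : E :=
  y 0 + ∑ i ∈ range N, (projIcc (0 : ℝ) 1 zero_le_one (s - i) : ℝ) • (y (i + 1) - y i)

variable {y : ℕ → E} {N : ℕ} {s : ℝ}

theorem polygonal_succ (y : ℕ → E) (N : ℕ) (s : ℝ) :
    polygonal y (N + 1) s =
      polygonal y N s + (projIcc (0 : ℝ) 1 zero_le_one (s - N) : ℝ) • (y (N + 1) - y N) := by
  rw [polygonal, sum_range_succ, ← add_assoc, polygonal]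

theorem polygonal_of_le (hs : (N : ℝ) ≤ s) : polygonal y N s = y N := by
  have hterm : ∀ i ∈ range N,
      (projIcc (0 : ℝ) 1 zero_le_one (s - i) : ℝ) • (y (i + 1) - y i) = y (i + 1) - y i := by
    intro i hi
    have : (i : ℝ) + 1 ≤ N := by exact_mod_cast mem_range.1 hi
    rw [projIcc_of_right_le _ (by linarith), one_smul]
  rw [polygonal, sum_congr rfl hterm, sum_range_sub, add_sub_cancel]

theorem polygonal_of_nonpos (hs : s ≤ 0) : polygonal y N s = y 0 := by
  have hterm : ∀ i ∈ range N,
      (projIcc (0 : ℝ) 1 zero_le_one (s - i) : ℝ) • (y (i + 1) - y i) = 0 := by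
    intro i _
    rw [projIcc_of_le_left _ (by linarith [i.cast_nonneg (α := ℝ)]), Subtype.coe_mk, zero_smul]
  rw [polygonal, sum_eq_zero hterm, add_zero]

theorem polygonal_eq_of_le {M : ℕ} (hs : s ≤ M) (hMN : M ≤ N) :
    polygonal y N s = polygonal y M s := by
  induction N, hMN using Nat.le_induction with
  | base => rfl
  | succ N hMN ih =>
    have : s - N ≤ 0 := by linarith [(Nat.cast_le (α := ℝ)).2 hMN]
    rw [polygonal_succ, projIcc_of_le_left _ this, Subtype.coe_mk, zero_smul, add_zero, ih]

theorem polygonal_eq_add_smul {i : ℕ} (hi : i < N) (h₁ : (i : ℝ) ≤ s) (h₂ : s ≤ i + 1) :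
    polygonal y N s = y i + (s - i) • (y (i + 1) - y i) := by
  rw [polygonal_eq_of_le (M := i + 1) (by exact_mod_cast h₂) hi, polygonal_succ,
    polygonal_of_le h₁, projIcc_of_mem _ ⟨by linarith, by linarith⟩]

theorem Convex.polygonal_mem {K : Set E} (hK : Convex ℝ K) (h₀ : 0 ≤ s) (hN : s ≤ N)
    (hy : ∀ i ≤ N, |s - i| ≤ 1 → y i ∈ K) : polygonal y N s ∈ K := by
  obtain hNs | hsN := le_or_gt (N : ℝ) s
  · rw [polygonal_of_le hNs]
    exact hy N le_rfl (by rw [abs_le]; constructor <;> linarith)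
  set i := ⌊s⌋₊
  have hi₁ : (i : ℝ) ≤ s := Nat.floor_le h₀
  have hi₂ : s < i + 1 := Nat.lt_floor_add_one s
  have hiN : i < N := by exact_mod_cast hi₁.trans_lt hsN
  rw [polygonal_eq_add_smul hiN hi₁ hi₂.le]
  refine hK.add_smul_sub_mem (hy i hiN.le ?_) (hy (i + 1) hiN ?_) ⟨by linarith, by linarith⟩
  all_goals rw [abs_le]; push_cast; constructor <;> linarith

theorem continuous_polygonal [TopologicalSpace E] [IsTopologicalAddGroup E] [ContinuousSMul ℝ E]
    (y : ℕ → E) (N : ℕ) : Continuous (polygonal y N) := by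
  unfold polygonal
  fun_prop

end Polygonal

theorem Metric.mem_cthickening_iff_infDist_le {X : Type*} [PseudoMetricSpace X] {s : Set X}
    {x : X} {δ : ℝ} (hs : s.Nonempty) (hδ : 0 ≤ δ) : x ∈ cthickening δ s ↔ infDist x s ≤ δ := by
  rw [mem_cthickening_iff, infDist, ENNReal.le_ofReal_iff_toReal_le (infEDist_ne_top hs) hδ]

theorem Path.exists_tendsto_of_dist_le_geometric {X : Type*} [MetricSpace X] [CompleteSpace X]
    {x y : X} {γ : ℕ → Path x y} {C r : ℝ} (hr : r < 1)
    (h : ∀ n t, dist (γ n t) (γ (n + 1) t) ≤ C * r ^ n) :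
    ∃ γ' : Path x y, ∀ t, Tendsto (fun n => γ n t) atTop (𝓝 (γ' t)) := by
  have hcauchy : CauchySeq fun n => (γ n : C(I, X)) :=
    cauchySeq_of_le_geometric r C hr fun n =>
      (ContinuousMap.dist_le (dist_nonneg.trans (h n 0))).2 (h n)
  obtain ⟨f, hf⟩ := cauchySeq_tendsto_of_complete hcauchy
  have hpt : ∀ t, Tendsto (fun n => γ n t) atTop (𝓝 (f t)) := fun t =>
    ((continuous_eval_const t).tendsto f).comp hf
  refine ⟨⟨f, ?_, ?_⟩, hpt⟩
  · simpa [eq_comm] using hpt 0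
  · simpa [eq_comm] using hpt 1

section SetValued

variable {X : Type*} [PseudoMetricSpace X] {S : X → Set X} {l : ℝ}

theorem infDist_le_mul_dist_of_mem (hne : ∀ x, (S x).Nonempty)
    (hbdd : ∀ x, Bornology.IsBounded (S x)) (hlip : ∀ x y, hausdorffDist (S x) (S y) ≤ l * dist x y)
    {x x' y : X} (hy : y ∈ S x') : infDist y (S x) ≤ l * dist x' x :=
  (infDist_le_hausdorffDist_of_mem hy <|
    hausdorffEDist_ne_top_of_nonempty_of_bounded (hne _) (hne _) (hbdd _) (hbdd _)).trans
    (hlip x' x)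

theorem infDist_self_le (hne : ∀ x, (S x).Nonempty) (hbdd : ∀ x, Bornology.IsBounded (S x))
    (hlip : ∀ x y, hausdorffDist (S x) (S y) ≤ l * dist x y)
    (x y : X) : infDist x (S x) ≤ infDist x (S y) + l * dist y x :=
  (infDist_le_infDist_add_hausdorffDist <|
    hausdorffEDist_ne_top_of_nonempty_of_bounded (hne _) (hne _) (hbdd _) (hbdd _)).trans
    (add_le_add_right (hlip y x) _)

theorem continuous_infDist_self (hne : ∀ x, (S x).Nonempty) (hbdd : ∀ x, Bornology.IsBounded (S x))
    (hlip : ∀ x y, hausdorffDist (S x) (S y) ≤ l * dist x y) :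
    Continuous fun x => infDist x (S x) := by
  refine (LipschitzWith.of_le_add_mul' (1 + l) fun x y => ?_).continuous
  calc infDist x (S x) ≤ infDist x (S y) + l * dist y x := infDist_self_le hne hbdd hlip x y
    _ ≤ infDist y (S y) + dist x y + l * dist y x := by grw [infDist_le_infDist_add_dist]
    _ = infDist y (S y) + (1 + l) * dist x y := by rw [dist_comm y x]; ring

end SetValued

section Contraction

variable {E : Type*} [NormedAddCommGroup E] [NormedSpace ℝ E] {S : E → Set E} {l : ℝ}
  {z z' : E}

theorem exists_path_mem_closedBall_inter_cthickening (hne : ∀ x, (S x).Nonempty)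
    (hcv : ∀ x, Convex ℝ (S x)) (hcp : ∀ x, IsCompact (S x)) (hl₀ : 0 ≤ l)
    (hlip : ∀ x y, hausdorffDist (S x) (S y) ≤ l * dist x y) (hz : z ∈ S z) (hz' : z' ∈ S z')
    (γ : Path z z') {ε δ : ℝ} (hγ : ∀ t, infDist (γ t) (S (γ t)) ≤ ε) (hδ : 0 < δ) :
    ∃ γ' : Path z z', ∀ t, γ' t ∈ closedBall (γ t) (ε + δ) ∩ cthickening (l * δ) (S (γ t)) := by
  obtain ⟨η, hη, hγη⟩ := Metric.uniformContinuous_iff.1 γ.uniformContinuous_extend δ hδ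
  obtain ⟨n, hn⟩ := exists_nat_one_div_lt hη
  choose p hpS hpd using fun x => (hcp x).exists_infDist_eq_dist (hne x) x
  have hp_self : ∀ x ∈ S x, p x = x := fun x hx =>
    (dist_eq_zero.1 (by rw [← hpd, infDist_zero_of_mem hx])).symm
  set N := n + 1
  set y : ℕ → E := fun i => p (γ.extend (i / N))
  have hy₀ : y 0 = z := by simp [y, hp_self z hz]
  have hN : (N : ℝ) ≠ 0 := by positivity
  have hyN : y N = z' := by simp [y, hN, hp_self z' hz']
  refine ⟨Path.ofLine (f := fun t => polygonal y N (N * t))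
    ((continuous_polygonal y N).comp (continuous_const_mul _)).continuousOn
    (by simp [polygonal_of_nonpos, hy₀]) (by simp [polygonal_of_le, hyN]), fun t => ?_⟩
  refine ((convex_closedBall _ _).inter ((hcv _).cthickening _)).polygonal_mem
    (mul_nonneg N.cast_nonneg t.2.1) (mul_le_of_le_one_right N.cast_nonneg t.2.2)
    fun i _ hi => ?_
  have hclose : dist (γ.extend (i / N)) (γ t) < δ := by
    rw [← γ.extend_extends' t]
    refine hγη ((Real.dist_eq _ _).trans_lt ?_)
    calc |i / N - (t : ℝ)| = |N * (t : ℝ) - i| / N := by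
          rw [abs_sub_comm, show (t : ℝ) - i / N = (N * t - i) / N by field_simp, abs_div,
            Nat.abs_cast]
      _ ≤ 1 / N := by gcongr
      _ < η := by simpa [N] using hn
  refine ⟨?_, ?_⟩
  · calc dist (y i) (γ t) ≤ dist (y i) (γ.extend (i / N)) + dist (γ.extend (i / N)) (γ t) :=
          dist_triangle _ _ _
      _ ≤ ε + δ := by rw [dist_comm, ← hpd]; exact add_le_add (hγ _) hclose.le
  · rw [mem_cthickening_iff_infDist_le (hne _) (by positivity)]
    exact (infDist_le_mul_dist_of_mem hne (fun x => (hcp x).isBounded) hlip (hpS _)).trans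
      (by gcongr)

theorem exists_path_infDist_le_and_dist_le (hne : ∀ x, (S x).Nonempty)
    (hcv : ∀ x, Convex ℝ (S x)) (hcp : ∀ x, IsCompact (S x)) (hl₀ : 0 ≤ l) (hl₁ : l < 1)
    (hlip : ∀ x y, hausdorffDist (S x) (S y) ≤ l * dist x y) (hz : z ∈ S z) (hz' : z' ∈ S z')
    (γ : Path z z') {ε : ℝ} (hγ : ∀ t, infDist (γ t) (S (γ t)) ≤ ε) (hε : 0 < ε) :
    ∃ γ' : Path z z', ∀ t,
      infDist (γ' t) (S (γ' t)) ≤ (1 + l) / 2 * ε ∧ dist (γ' t) (γ t) ≤ 2 * ε := by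
  -- `δ` is chosen so that `l * (ε + 2 * δ) ≤ (1 + l) / 2 * ε`
  set δ := (1 - l) / 4 * ε with hδ
  obtain ⟨γ', hγ'⟩ := exists_path_mem_closedBall_inter_cthickening hne hcv hcp hl₀ hlip hz hz' γ hγ
    (mul_pos (div_pos (sub_pos.2 hl₁) four_pos) hε)
  refine ⟨γ', fun t => ?_⟩
  obtain ⟨hdist, hthick⟩ := hγ' t
  rw [mem_closedBall] at hdist
  rw [mem_cthickening_iff_infDist_le (hne _) (by positivity)] at hthick
  constructor
  · calc infDist (γ' t) (S (γ' t)) ≤ infDist (γ' t) (S (γ t)) + l * dist (γ t) (γ' t) :=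
          infDist_self_le hne (fun x => (hcp x).isBounded) hlip _ _
      _ ≤ l * δ + l * (ε + δ) := by rw [dist_comm]; gcongr
      _ ≤ (1 + l) / 2 * ε := by nlinarith [mul_nonneg (sq_nonneg (1 - l)) hε.le]
  · nlinarith

theorem exists_seq_path_infDist_le (hne : ∀ x, (S x).Nonempty)
    (hcv : ∀ x, Convex ℝ (S x)) (hcp : ∀ x, IsCompact (S x)) (hl₀ : 0 ≤ l) (hl₁ : l < 1)
    (hlip : ∀ x y, hausdorffDist (S x) (S y) ≤ l * dist x y) (hz : z ∈ S z) (hz' : z' ∈ S z') :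
    ∃ (C : ℝ) (γ : ℕ → Path z z'), ∀ n t,
      infDist (γ n t) (S (γ n t)) ≤ C * ((1 + l) / 2) ^ n ∧
        dist (γ (n + 1) t) (γ n t) ≤ 2 * C * ((1 + l) / 2) ^ n := by
  set r := (1 + l) / 2
  set γ₀ := PathConnectedSpace.somePath z z'
  obtain ⟨B, hB⟩ := (isCompact_range
    ((continuous_infDist_self hne (fun x => (hcp x).isBounded) hlip).comp γ₀.continuous)).bddAbove
  set C := max B 1
  have hstep : ∀ n (γ : Path z z'), (∀ t, infDist (γ t) (S (γ t)) ≤ C * r ^ n) →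
      ∃ γ' : Path z z', ∀ t,
        infDist (γ' t) (S (γ' t)) ≤ C * r ^ (n + 1) ∧ dist (γ' t) (γ t) ≤ 2 * C * r ^ n := by
    intro n γ hγ
    obtain ⟨γ', hγ'⟩ := exists_path_infDist_le_and_dist_le hne hcv hcp hl₀ hl₁ hlip hz hz' γ hγ
      (by positivity)
    exact ⟨γ', fun t => ⟨(hγ' t).1.trans_eq (by ring), (hγ' t).2.trans_eq (by ring)⟩⟩
  choose! next hnext using hstep
  let γ : ℕ → Path z z' := fun n => Nat.rec γ₀ next n
  have hγ : ∀ n t, infDist (γ n t) (S (γ n t)) ≤ C * r ^ n := by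
    intro n
    induction n with
    | zero => exact fun t => (hB (mem_range_self t)).trans (by simp [C])
    | succ n ih => exact fun t => (hnext n (γ n) ih t).1
  exact ⟨C, γ, fun n t => ⟨hγ n t, (hnext n (γ n) (hγ n) t).2⟩⟩

theorem joinedIn_setOf_mem_self [CompleteSpace E] (hne : ∀ x, (S x).Nonempty)
    (hcv : ∀ x, Convex ℝ (S x)) (hcp : ∀ x, IsCompact (S x)) (hl₀ : 0 ≤ l) (hl₁ : l < 1)
    (hlip : ∀ x y, hausdorffDist (S x) (S y) ≤ l * dist x y) (hz : z ∈ S z) (hz' : z' ∈ S z') :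
    JoinedIn {x | x ∈ S x} z z' := by
  obtain ⟨C, γ, hγ⟩ := exists_seq_path_infDist_le hne hcv hcp hl₀ hl₁ hlip hz hz'
  obtain ⟨γ', hγ'⟩ := Path.exists_tendsto_of_dist_le_geometric (by linarith : (1 + l) / 2 < 1)
    fun n t => (dist_comm _ _).trans_le (hγ n t).2
  refine ⟨γ', fun t => ?_⟩
  have hlim : Tendsto (fun n => C * ((1 + l) / 2) ^ n) atTop (𝓝 0) := by
    simpa using (tendsto_pow_atTop_nhds_zero_of_lt_one (by linarith) (by linarith)).const_mul C
  have hzero : infDist (γ' t) (S (γ' t)) ≤ 0 :=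
    le_of_tendsto_of_tendsto'
      (((continuous_infDist_self hne (fun x => (hcp x).isBounded) hlip).tendsto _).comp (hγ' t))
      hlim fun n => (hγ n t).1
  exact ((hcp _).isClosed.mem_iff_infDist_zero (hne _)).2 (le_antisymm hzero infDist_nonneg)

end Contraction

theorem stmt3 {d : ℕ} (G : (Fin d → ℝ) → Set (Fin d → ℝ))
    (hne : ∀ x, (G x).Nonempty) (hcv : ∀ x, Convex ℝ (G x))
    (hcp : ∀ x, IsCompact (G x))
    (l : ℝ) (hl : l < 1)
    (hlip : ∀ x y, hausdorffDist (G x) (G y) ≤ l * dist x y)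
    (ξ : Fin d → ℝ) (z ztilde : Fin d → ℝ)
    (hz : ξ ∈ {z} + G z) (hztilde : ξ ∈ {ztilde} + G ztilde) :
    ∃ φ : ℝ → (Fin d → ℝ), ContinuousOn φ (Set.Icc 0 1) ∧
      φ 0 = z ∧ φ 1 = ztilde ∧
      ∀ t ∈ Set.Icc (0:ℝ) 1, ξ ∈ {φ t} + G (φ t) := by
  have hmem : ∀ x, ξ ∈ {x} + G x ↔ x ∈ {ξ} - G x := fun x => by
    rw [singleton_add, singleton_sub, mem_image, mem_image]
    exact exists_congr fun g => and_congr_right fun _ => by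
      rw [sub_eq_iff_eq_add', add_comm, eq_comm]
  have hreflect : Isometry (ξ - · : (Fin d → ℝ) → Fin d → ℝ) :=
    Isometry.of_dist_eq fun a b => dist_sub_left ξ a b
  have hlip' : ∀ x y, hausdorffDist ({ξ} - G x) ({ξ} - G y) ≤ max l 0 * dist x y := fun x y => by
    rw [singleton_sub, singleton_sub, hausdorffDist_image hreflect]
    exact (hlip x y).trans (by gcongr; exact le_max_left l 0)
  obtain ⟨γ, hγ⟩ := joinedIn_setOf_mem_self (S := fun x => {ξ} - G x)
    (fun x => (singleton_nonempty ξ).sub (hne x)) (fun x => (convex_singleton ξ).sub (hcv x))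
    (fun x => by rw [singleton_sub]; exact (hcp x).image (by fun_prop))
    (le_max_right l 0) (max_lt hl zero_lt_one) hlip' ((hmem z).1 hz) ((hmem ztilde).1 hztilde)
  refine ⟨γ.extend, γ.continuous_extend.continuousOn, γ.extend_zero, γ.extend_one, fun t ht => ?_⟩
  rw [hmem, γ.extend_apply ht]
  exact hγ _
end

section
/- Let F : ℝ^d → (convex compact subsets of ℝ^d) be a set-valued map. Then F is L-Lipschitz w.r.t. the sup-norm Hausdorff distance if and only if the boundary map x ↦ ∂F(x) is L-Lipschitz w.r.t. the sup-norm Hausdorff distance, where ∂F(x) denotes the topological boundary of the convex compact set F(x). -/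
/-!
The Hausdorff distance of two nonempty convex compact sets equals that of their frontiers, so
the two Lipschitz conditions coincide.

`d_H(A, B) ≤ d_H(∂A, ∂B)`: the closed `ρ`-thickening of the convex set `B` is convex and closed,
so once it contains `∂A` it contains the extreme points of `A`, hence all of `A` by Krein–Milman.

`d_H(∂A, ∂B) ≤ d_H(A, B)`: let `a ∈ ∂A`. If `a ∉ B`, the segment from `a` to its nearest point of
`B` crosses `∂B`. If `a ∈ int B`, separate a point outside `A` that is `ε`-close to `a` from `A` by
a unit functional `f`, and follow from `a` a direction `v` with `‖v‖ ≤ 1` and `f v = 1` until the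
ray leaves `B` at `b = a + t v ∈ ∂B`. Then `A` lies in `{f < f a + ε}` while `f b = f a + t`, so
the point of `A` nearest to `b` is at distance more than `t - ε` from `b`, whence
`t < d_H(A, B) + ε`.
-/

open Metric Set

theorem IsPreconnected.inter_frontier_nonempty {X : Type*} [TopologicalSpace X] {s t : Set X}
    (hs : IsPreconnected s) (hin : (s ∩ t).Nonempty) (hout : (s \ t).Nonempty) :
    (s ∩ frontier t).Nonempty := by
  by_contra h
  have hcover : s ⊆ interior t ∪ interior tᶜ := fun x hx => by
    rw [← compl_frontier_eq_union_interior]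
    exact fun hxf => h ⟨x, hx, hxf⟩
  obtain ⟨x, -, hxt, hxt'⟩ := hs _ _ isOpen_interior isOpen_interior hcover
    (hin.mono fun y hy => ⟨hy.1, (hcover hy.1).resolve_right fun h' => interior_subset h' hy.2⟩)
    (hout.mono fun y hy => ⟨hy.1, (hcover hy.1).resolve_left fun h' => hy.2 (interior_subset h')⟩)
  exact interior_subset hxt' (interior_subset hxt)

section

variable {E : Type*} [NormedAddCommGroup E] [NormedSpace ℝ E]

theorem exists_mem_frontier_dist_le_of_notMem {s : Set E} {a b : E} (ha : a ∉ s) (hb : b ∈ s) :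
    ∃ c ∈ frontier s, dist a c ≤ dist a b := by
  obtain ⟨c, hseg, hc⟩ := (convex_segment a b).isPreconnected.inter_frontier_nonempty
    ⟨b, right_mem_segment ℝ a b, hb⟩ ⟨a, left_mem_segment ℝ a b, ha⟩
  exact ⟨c, hc, by simpa [dist_comm] using segment_subset_closedBall_left a b hseg⟩

theorem Bornology.IsBounded.exists_add_smul_mem_frontier {s : Set E} (hs : Bornology.IsBounded s)
    {a v : E} (ha : a ∈ s) (hv : v ≠ 0) : ∃ t : ℝ, 0 ≤ t ∧ a + t • v ∈ frontier s := by
  obtain ⟨R, hR⟩ := hs.subset_closedBall a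
  have hray : IsPreconnected ((fun t : ℝ => a + t • v) '' Ici 0) :=
    isPreconnected_Ici.image _ (by fun_prop)
  have hvpos : 0 < ‖v‖ := norm_pos_iff.2 hv
  set T := (|R| + 1) / ‖v‖
  have hT : a + T • v ∉ s := fun h => by
    have := hR h
    rw [mem_closedBall, dist_eq_norm, add_sub_cancel_left, norm_smul, Real.norm_eq_abs,
      abs_of_nonneg (by positivity), div_mul_cancel₀ _ hvpos.ne'] at this
    linarith [le_abs_self R]
  obtain ⟨-, ⟨t, ht, rfl⟩, hfr⟩ := hray.inter_frontier_nonempty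
    ⟨a, ⟨0, self_mem_Ici, by simp⟩, ha⟩ ⟨_, ⟨T, mem_Ici.2 (by positivity), rfl⟩, hT⟩
  exact ⟨t, ht, hfr⟩

theorem ContinuousLinearMap.exists_norm_le_one_apply_eq_norm [ProperSpace E] (f : E →L[ℝ] ℝ) :
    ∃ v : E, ‖v‖ ≤ 1 ∧ f v = ‖f‖ := by
  have hK := (isCompact_closedBall (0 : E) 1).image (continuous_norm.comp f.continuous)
  obtain ⟨x, hx, hfx⟩ := f.sSup_unitClosedBall_eq_norm ▸
    hK.sSup_mem ((nonempty_closedBall.2 zero_le_one).image _)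
  rw [mem_closedBall_zero_iff] at hx
  simp only [Function.comp_apply, Real.norm_eq_abs] at hfx
  rcases abs_choice (f x) with h | h
  · exact ⟨x, hx, h ▸ hfx⟩
  · exact ⟨-x, by rwa [norm_neg], by rw [map_neg, ← h, hfx]⟩

theorem extremePoints_subset_frontier [Nontrivial E] (A : Set E) :
    A.extremePoints ℝ ⊆ frontier A := fun _ hx =>
  ⟨subset_closure hx.1, (disjoint_interior_extremePoints A).notMem_of_mem_right hx⟩

variable {A B : Set E}

theorem IsCompact.subset_cthickening_of_frontier_subset [Nontrivial E]
    (hA : IsCompact A) (hAcv : Convex ℝ A) (hBcv : Convex ℝ B) {δ : ℝ}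
    (h : frontier A ⊆ cthickening δ B) : A ⊆ cthickening δ B := by
  rw [← closure_convexHull_extremePoints hA hAcv]
  exact closure_minimal (convexHull_min ((extremePoints_subset_frontier A).trans h)
    (hBcv.cthickening δ)) isClosed_cthickening

theorem exists_dist_le_hausdorffDist_frontier [Nontrivial E] (hAcv : Convex ℝ A)
    (hAcp : IsCompact A) (hBne : B.Nonempty) (hBcv : Convex ℝ B) (hBcp : IsCompact B)
    {x : E} (hx : x ∈ A) : ∃ y ∈ B, dist x y ≤ hausdorffDist (frontier A) (frontier B) := by
  set ρ := hausdorffDist (frontier A) (frontier B)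
  have hfB : (frontier B).Nonempty := nonempty_frontier_iff.2 ⟨hBne, hBcp.ne_univ⟩
  have hfBcp : IsCompact (frontier B) :=
    hBcp.of_isClosed_subset isClosed_frontier hBcp.isClosed.frontier_subset
  have hfront : frontier A ⊆ cthickening ρ B := fun z hz => by
    obtain ⟨w, hw, hzw⟩ := hfBcp.exists_infDist_eq_dist hfB z
    have hfin := hausdorffEDist_ne_top_of_nonempty_of_bounded ⟨z, hz⟩ hfB
      (hAcp.isBounded.subset hAcp.isClosed.frontier_subset) hfBcp.isBounded
    exact mem_cthickening_of_dist_le z w ρ B (hBcp.isClosed.frontier_subset hw)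
      (hzw ▸ infDist_le_hausdorffDist_of_mem hz hfin)
  have hxB := hAcp.subset_cthickening_of_frontier_subset hAcv hBcv hfront hx
  rw [hBcp.cthickening_eq_biUnion_closedBall hausdorffDist_nonneg, mem_iUnion₂] at hxB
  obtain ⟨y, hy, hxy⟩ := hxB
  exact ⟨y, hy, hxy⟩

theorem hausdorffDist_le_hausdorffDist_frontier [Nontrivial E] (hAne : A.Nonempty)
    (hBne : B.Nonempty) (hAcv : Convex ℝ A) (hBcv : Convex ℝ B) (hAcp : IsCompact A)
    (hBcp : IsCompact B) : hausdorffDist A B ≤ hausdorffDist (frontier A) (frontier B) :=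
  hausdorffDist_le_of_mem_dist hausdorffDist_nonneg
    (fun _ hx => exists_dist_le_hausdorffDist_frontier hAcv hAcp hBne hBcv hBcp hx)
    (fun _ hx => hausdorffDist_comm (s := frontier A) ▸
      exists_dist_le_hausdorffDist_frontier hBcv hBcp hAne hAcv hAcp hx)

theorem Convex.exists_norm_eq_one_forall_lt_add_of_mem_frontier (hA : Convex ℝ A)
    (hAc : IsClosed A) {a : E} (ha : a ∈ frontier A) {ε : ℝ} (hε : 0 < ε) :
    ∃ f : StrongDual ℝ E, ‖f‖ = 1 ∧ ∀ q ∈ A, f q < f a + ε := by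
  have haA : a ∈ A := hAc.frontier_subset ha
  have haAc : a ∈ closure Aᶜ := by rw [closure_compl]; exact ha.2
  obtain ⟨z, hz, haz⟩ := Metric.mem_closure_iff.1 haAc ε hε
  obtain ⟨f, u, hfA, hfz⟩ := geometric_hahn_banach_closed_point hA hAc hz
  have hf : 0 < ‖f‖ := norm_pos_iff.2 fun h0 => by
    simp only [h0, zero_apply] at hfA hfz
    linarith [hfA a haA]
  refine ⟨‖f‖⁻¹ • f, by rw [norm_smul, norm_inv, norm_norm, inv_mul_cancel₀ hf.ne'],
    fun q hq => ?_⟩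
  have hfq : f q < f a + ‖f‖ * ε := calc
    f q < f z := (hfA q hq).trans hfz
    _ = f a + f (z - a) := by rw [map_sub, add_sub_cancel]
    _ ≤ f a + ‖f‖ * ‖z - a‖ := by gcongr; exact (Real.le_norm_self _).trans (f.le_opNorm _)
    _ < f a + ‖f‖ * ε := by rw [← dist_eq_norm, dist_comm]; gcongr
  calc (‖f‖⁻¹ • f) q = ‖f‖⁻¹ * f q := rfl
    _ < ‖f‖⁻¹ * (f a + ‖f‖ * ε) := by gcongr
    _ = (‖f‖⁻¹ • f) a + ε := by
      rw [mul_add, inv_mul_cancel_left₀ hf.ne']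
      rfl

theorem infDist_frontier_le_hausdorffDist_add_of_mem_interior [ProperSpace E]
    (hAcv : Convex ℝ A) (hAcp : IsCompact A) (hBcp : IsCompact B) {a : E}
    (ha : a ∈ frontier A) (haB : a ∈ interior B) {ε : ℝ} (hε : 0 < ε) :
    infDist a (frontier B) ≤ hausdorffDist A B + ε := by
  obtain ⟨f, hf1, hfA⟩ := hAcv.exists_norm_eq_one_forall_lt_add_of_mem_frontier hAcp.isClosed ha hε
  obtain ⟨v, hv1, hfv⟩ := f.exists_norm_le_one_apply_eq_norm
  rw [hf1] at hfv
  have hv : v ≠ 0 := by rintro rfl; simp at hfv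
  obtain ⟨t, ht, hb⟩ := hBcp.isBounded.exists_add_smul_mem_frontier (interior_subset haB) hv
  set b := a + t • v
  have hAne : A.Nonempty := ⟨a, hAcp.isClosed.frontier_subset ha⟩
  obtain ⟨q, hqA, hq⟩ := hAcp.exists_infDist_eq_dist hAne b
  have hbB : b ∈ B := hBcp.isClosed.frontier_subset hb
  have hbq : dist b q ≤ hausdorffDist A B := hausdorffDist_comm (s := B) ▸ hq ▸
    infDist_le_hausdorffDist_of_mem hbB
      (hausdorffEDist_ne_top_of_nonempty_of_bounded ⟨b, hbB⟩ hAne hBcp.isBounded hAcp.isBounded)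
  have hfb : f b = f a + t := by simp [b, hfv]
  refine le_of_lt ?_
  calc infDist a (frontier B) ≤ dist a b := infDist_le_dist_of_mem hb
    _ ≤ t := by
      rw [dist_self_add_right, norm_smul, Real.norm_of_nonneg ht]
      exact mul_le_of_le_one_right ht hv1
    _ < f b - f q + ε := by linarith [hfA q hqA]
    _ ≤ dist b q + ε := by
      rw [← map_sub, dist_eq_norm]
      gcongr
      simpa [hf1] using (Real.le_norm_self _).trans (f.le_opNorm (b - q))
    _ ≤ hausdorffDist A B + ε := by gcongr

theorem infDist_frontier_le_hausdorffDist [ProperSpace E] (hAcv : Convex ℝ A)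
    (hAcp : IsCompact A) (hBne : B.Nonempty) (hBcp : IsCompact B) {a : E}
    (ha : a ∈ frontier A) : infDist a (frontier B) ≤ hausdorffDist A B := by
  have haA : a ∈ A := hAcp.isClosed.frontier_subset ha
  by_cases haB : a ∈ B
  · by_cases hint : a ∈ interior B
    · exact le_of_forall_pos_le_add fun ε hε =>
        infDist_frontier_le_hausdorffDist_add_of_mem_interior hAcv hAcp hBcp ha hint hε
    · have hfr : a ∈ frontier B := ⟨subset_closure haB, hint⟩
      exact (infDist_zero_of_mem hfr).trans_le hausdorffDist_nonneg
  · obtain ⟨b, hbB, hab⟩ := hBcp.exists_infDist_eq_dist hBne a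
    obtain ⟨c, hc, hac⟩ := exists_mem_frontier_dist_le_of_notMem haB hbB
    have hfin := hausdorffEDist_ne_top_of_nonempty_of_bounded ⟨a, haA⟩ hBne hAcp.isBounded
      hBcp.isBounded
    calc infDist a (frontier B) ≤ dist a c := infDist_le_dist_of_mem hc
      _ ≤ dist a b := hac
      _ ≤ hausdorffDist A B := hab ▸ infDist_le_hausdorffDist_of_mem haA hfin

theorem hausdorffDist_frontier_eq [ProperSpace E] (hAne : A.Nonempty) (hBne : B.Nonempty)
    (hAcv : Convex ℝ A) (hBcv : Convex ℝ B) (hAcp : IsCompact A) (hBcp : IsCompact B) :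
    hausdorffDist (frontier A) (frontier B) = hausdorffDist A B := by
  cases subsingleton_or_nontrivial E
  · simp [hAne.eq_univ, hBne.eq_univ]
  refine le_antisymm (hausdorffDist_le_of_infDist hausdorffDist_nonneg
    (fun _ ha => infDist_frontier_le_hausdorffDist hAcv hAcp hBne hBcp ha)
    (fun _ hb => hausdorffDist_comm (s := A) ▸
      infDist_frontier_le_hausdorffDist hBcv hBcp hAne hAcp hb))
    (hausdorffDist_le_hausdorffDist_frontier hAne hBne hAcv hBcv hAcp hBcp)

end

theorem stmt17 {d : ℕ} (F : (Fin d → ℝ) → Set (Fin d → ℝ))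
    (hne : ∀ x, (F x).Nonempty) (hcv : ∀ x, Convex ℝ (F x))
    (hcp : ∀ x, IsCompact (F x)) (L : ℝ) :
    (∀ x y, hausdorffDist (F x) (F y) ≤ L * dist x y) ↔
    (∀ x y, hausdorffDist (frontier (F x)) (frontier (F y)) ≤ L * dist x y) := by
  have key : ∀ x y, hausdorffDist (frontier (F x)) (frontier (F y)) = hausdorffDist (F x) (F y) :=
    fun x y => hausdorffDist_frontier_eq (hne x) (hne y) (hcv x) (hcv y) (hcp x) (hcp y)
  simp only [key]
end
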